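/- arXiv:1503.07848 — 5 statements merged into one kernel-verified Lean document; each statement's English description precedes it below -/
import Mathlib

section
/- Let i ≥ 1 and let l_1, …, l_i and m_1, …, m_i be nonnegative integers. For j = 1, …, i let C_j denote the digit block consisting of '10' followed by l_j nines followed by '89', and let Z_j denote a block of m_j zeros. If M is the positive integer whose big-endian decimal digit string is either the palindromic concatenation C_1 Z_1 C_2 Z_2 … C_{i-1} Z_{i-1} C_i Z_i C_i Z_{i-1} C_{i-1} … Z_1 C_1 (with 2i blocks C and central zero block Z_i) or the palindromic concatenation C_1 Z_1 … C_{i-1} Z_{i-1} C_i Z_{i-1} C_{i-1} … Z_1 C_1 (with 2i−1 blocks C and central block C_i), then M is a (10,9)-reverse multiple. -/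
/-- The big-endian digit block `10 9…9 89` with `l` nines. -/
def cBlock9 (l : ℕ) : List ℕ := [1, 0] ++ List.replicate l 9 ++ [8, 9]

/-- A block of `m` zero digits. -/
def zBlock (m : ℕ) : List ℕ := List.replicate m 0

/-- The big-endian digit string
`C_1 Z_1 … C_{i-1} Z_{i-1} C_i Z_i C_i Z_{i-1} C_{i-1} … Z_1 C_1`
(with `2 * i` blocks `C` and central zero block `Z_i`), where `C_j` is the block
`10 9…9 89` with `l j` nines and `Z_j` is a block of `m j` zeros (indices `1, …, i`). -/
def evenString9 (i : ℕ) (l m : ℕ → ℕ) : List ℕ :=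
  ((List.range i).map fun j => cBlock9 (l (j + 1)) ++ zBlock (m (j + 1))).flatten ++
    cBlock9 (l i) ++
    (((List.range (i - 1)).map fun j =>
        zBlock (m (j + 1)) ++ cBlock9 (l (j + 1))).reverse).flatten

/-- The big-endian digit string
`C_1 Z_1 … C_{i-1} Z_{i-1} C_i Z_{i-1} C_{i-1} … Z_1 C_1`
(with `2 * i - 1` blocks `C` and central block `C_i`). -/
def oddString9 (i : ℕ) (l m : ℕ → ℕ) : List ℕ :=
  ((List.range (i - 1)).map fun j => cBlock9 (l (j + 1)) ++ zBlock (m (j + 1))).flatten ++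
    cBlock9 (l i) ++
    (((List.range (i - 1)).map fun j =>
        zBlock (m (j + 1)) ++ cBlock9 (l (j + 1))).reverse).flatten

lemma nines (l : ℕ) : Nat.ofDigits 10 (List.replicate l 9) + 1 = 10 ^ l := by
  induction l with
  | zero => simp [Nat.ofDigits]
  | succ n ih =>
    rw [List.replicate_succ, Nat.ofDigits_cons, pow_succ]
    push_cast at ih ⊢
    omega

lemma zval (m : ℕ) : Nat.ofDigits 10 (zBlock m) = 0 := by
  induction m with
  | zero => simp [zBlock, Nat.ofDigits]
  | succ n ih => rw [zBlock, List.replicate_succ, Nat.ofDigits_cons]; simpa [zBlock] using ih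

lemma zrev (m : ℕ) : (zBlock m).reverse = zBlock m := by simp [zBlock]

lemma cval (l : ℕ) :
    Nat.ofDigits 10 (cBlock9 l) = 9 * Nat.ofDigits 10 (cBlock9 l).reverse := by
  have hrev : (cBlock9 l).reverse = [9, 8] ++ List.replicate l 9 ++ [0, 1] := by
    simp [cBlock9]
  rw [hrev, cBlock9]
  have h9 := nines l
  rw [List.append_assoc, List.append_assoc, Nat.ofDigits_append, Nat.ofDigits_append,
    Nat.ofDigits_append, Nat.ofDigits_append]
  simp only [List.length_cons, List.length_nil, List.length_replicate, List.length_append]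
  norm_num [Nat.ofDigits]
  omega

/-- `P L` : the number with little-endian digits `L` is 9 times the one with digits `L.reverse`. -/
def P9 (L : List ℕ) : Prop := Nat.ofDigits 10 L = 9 * Nat.ofDigits 10 L.reverse

lemma P9_sandwich (A A' E : List ℕ) (hlen : A.length = A'.length)
    (h1 : Nat.ofDigits 10 A = 9 * Nat.ofDigits 10 A'.reverse)
    (h2 : Nat.ofDigits 10 A' = 9 * Nat.ofDigits 10 A.reverse)
    (hE : P9 E) : P9 (A ++ E ++ A') := by
  unfold P9 at hE ⊢
  rw [List.append_assoc, List.reverse_append, List.reverse_append, Nat.ofDigits_append,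
    Nat.ofDigits_append, Nat.ofDigits_append, Nat.ofDigits_append]
  simp only [List.length_reverse, List.length_append]
  rw [h1, h2, hE, hlen]
  ring

lemma P9_main (l m : ℕ → ℕ) (k : ℕ) (E : List ℕ) (hE : P9 E) :
    P9 (((List.range k).map fun j => cBlock9 (l (j + 1)) ++ zBlock (m (j + 1))).flatten ++ E ++
        (((List.range k).map fun j => zBlock (m (j + 1)) ++ cBlock9 (l (j + 1))).reverse).flatten) := by
  induction k generalizing E with
  | zero => simpa using hE
  | succ n ih =>
    rw [List.range_succ, List.map_append, List.map_append, List.flatten_append,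
      List.reverse_append, List.flatten_append]
    simp only [List.map_cons, List.map_nil, List.flatten_cons, List.flatten_nil,
      List.reverse_cons, List.reverse_nil, List.nil_append, List.append_nil]
    have key : P9 ((cBlock9 (l (n + 1)) ++ zBlock (m (n + 1))) ++ E ++
        (zBlock (m (n + 1)) ++ cBlock9 (l (n + 1)))) := by
      apply P9_sandwich _ _ _ (by simp [List.length_append]; omega)
      · rw [Nat.ofDigits_append, List.reverse_append, Nat.ofDigits_append, zrev,
          ]
        simp [zval, cval (l (n+1))]
      · rw [Nat.ofDigits_append, List.reverse_append, Nat.ofDigits_append, zrev,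
          ]
        simp [zval, cval (l (n+1))]
        ring
      · exact hE
    have := ih _ key
    -- rearrange associativity
    simpa [List.append_assoc] using this

lemma mem_c {d L : ℕ} (h : d ∈ cBlock9 L) : d < 10 := by
  simp [cBlock9, List.mem_replicate] at h
  omega

lemma mem_z {d mm : ℕ} (h : d ∈ zBlock mm) : d < 10 := by
  simp [zBlock, List.mem_replicate] at h
  omega

lemma sfx_ends (l m : ℕ → ℕ) (k : ℕ) :
    ∃ A, (((List.range (k+1)).map fun j =>
        zBlock (m (j + 1)) ++ cBlock9 (l (j + 1))).reverse).flatten = A ++ cBlock9 (l 1) := by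
  refine ⟨((((List.range k).map fun j =>
      zBlock (m (j + 2)) ++ cBlock9 (l (j + 2))).reverse).flatten) ++ zBlock (m 1), ?_⟩
  simp only [List.range_succ_eq_map, List.map_cons, List.map_map, List.reverse_cons,
    List.flatten_append, List.flatten_cons, List.flatten_nil, List.append_nil, List.append_assoc]
  rfl

lemma c_concat (L : ℕ) : ∃ B, cBlock9 L = B ++ [9] :=
  ⟨[1, 0] ++ List.replicate L 9 ++ [8], by simp [cBlock9]⟩

lemma close9 (Mv : ℕ) (S : List ℕ) (hd : Nat.digits 10 Mv = S.reverse)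
    (hP : Nat.ofDigits 10 S = 9 * Nat.ofDigits 10 S.reverse)
    (hmem : ∀ d ∈ S, d < 10) (hend : ∃ B, S = B ++ [9]) :
    (Nat.digits 10 Mv).reverse = Nat.digits 10 (9 * Mv) := by
  obtain ⟨B, rfl⟩ := hend
  have hM : Nat.ofDigits 10 (B ++ [9]).reverse = Mv := by rw [← hd, Nat.ofDigits_digits]
  have h9 : 9 * Mv = Nat.ofDigits 10 (B ++ [9]) := by rw [← hM, ← hP]
  rw [h9, Nat.digits_ofDigits 10 (by norm_num) _ hmem
    (fun h => by simp [List.getLast_concat]), hd, List.reverse_reverse]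

lemma mem_even9 {i : ℕ} {l m : ℕ → ℕ} {d : ℕ} (h : d ∈ evenString9 i l m) : d < 10 := by
  simp only [evenString9, List.mem_append, List.mem_flatten, List.mem_map,
    List.mem_reverse] at h
  rcases h with (⟨x, ⟨j, -, rfl⟩, hx⟩ | hc) | ⟨x, ⟨j, -, rfl⟩, hx⟩
  · rcases List.mem_append.1 hx with h | h
    exacts [mem_c h, mem_z h]
  · exact mem_c hc
  · rcases List.mem_append.1 hx with h | h
    exacts [mem_z h, mem_c h]

lemma mem_odd9 {i : ℕ} {l m : ℕ → ℕ} {d : ℕ} (h : d ∈ oddString9 i l m) : d < 10 := by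
  simp only [oddString9, List.mem_append, List.mem_flatten, List.mem_map,
    List.mem_reverse] at h
  rcases h with (⟨x, ⟨j, -, rfl⟩, hx⟩ | hc) | ⟨x, ⟨j, -, rfl⟩, hx⟩
  · rcases List.mem_append.1 hx with h | h
    exacts [mem_c h, mem_z h]
  · exact mem_c hc
  · rcases List.mem_append.1 hx with h | h
    exacts [mem_z h, mem_c h]

lemma ends9 (l m : ℕ → ℕ) (i : ℕ) (X : List ℕ) :
    ∃ B, X ++ cBlock9 (l i) ++ (((List.range (i - 1)).map fun j =>
      zBlock (m (j + 1)) ++ cBlock9 (l (j + 1))).reverse).flatten = B ++ [9] := by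
  rcases Nat.eq_zero_or_pos (i - 1) with h0 | hpos
  · rw [h0]
    obtain ⟨B, hB⟩ := c_concat (l i)
    exact ⟨X ++ B, by simp [hB, List.append_assoc]⟩
  · obtain ⟨k, hk⟩ : ∃ k, i - 1 = k + 1 := ⟨i - 2, by omega⟩
    rw [hk]
    obtain ⟨A, hA⟩ := sfx_ends l m k
    obtain ⟨B, hB⟩ := c_concat (l 1)
    exact ⟨X ++ cBlock9 (l i) ++ (A ++ B), by rw [hA, hB]; simp [List.append_assoc]⟩

/-- If the big-endian decimal digit string of a positive integer `M` is one of the two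
palindromic block concatenations built from blocks `C_j = 10 9…9 89` (with `l j` nines)
and zero blocks `Z_j` (of `m j` zeros), then `M` is a `(10, 9)`-reverse multiple. -/
theorem stmt_2 (i : ℕ) (hi : 1 ≤ i) (l m : ℕ → ℕ) (M : ℕ) (hM : 0 < M)
    (h : (Nat.digits 10 M).reverse = evenString9 i l m ∨
         (Nat.digits 10 M).reverse = oddString9 i l m) :
    (Nat.digits 10 M).reverse = Nat.digits 10 (9 * M) := by
  obtain ⟨n, rfl⟩ : ∃ n, i = n + 1 := ⟨i - 1, by omega⟩
  rcases h with h1 | h1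
  · have hd : Nat.digits 10 M = (evenString9 (n + 1) l m).reverse := by
      rw [← h1, List.reverse_reverse]
    have hE : P9 (cBlock9 (l (n + 1)) ++ zBlock (m (n + 1)) ++ cBlock9 (l (n + 1))) :=
      P9_sandwich _ _ _ rfl (cval _) (cval _) (by simp [P9, zval, zrev])
    have heq : evenString9 (n + 1) l m =
        ((List.range n).map fun j => cBlock9 (l (j + 1)) ++ zBlock (m (j + 1))).flatten ++
          (cBlock9 (l (n + 1)) ++ zBlock (m (n + 1)) ++ cBlock9 (l (n + 1))) ++
          (((List.range n).map fun j =>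
            zBlock (m (j + 1)) ++ cBlock9 (l (j + 1))).reverse).flatten := by
      simp [evenString9, List.range_succ, List.append_assoc]
    have hP : P9 (evenString9 (n + 1) l m) := by
      rw [heq]; exact P9_main l m n _ hE
    exact h1 ▸ close9 M _ hd hP (fun d hd' => mem_even9 hd') (ends9 l m (n + 1) _)
  · have hd : Nat.digits 10 M = (oddString9 (n + 1) l m).reverse := by
      rw [← h1, List.reverse_reverse]
    have hP : P9 (oddString9 (n + 1) l m) := by
      unfold oddString9; exact P9_main l m n _ (cval (l (n + 1)))
    exact h1 ▸ close9 M _ hd hP (fun d hd' => mem_odd9 hd') (ends9 l m (n + 1) _)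
end

section
/- There is no positive (10,8)-reverse multiple; that is, there is no positive integer M such that the reversal of the decimal digit expansion of M equals the decimal digit expansion of 8·M. -/
/-!
If `M > 0` and the digits of `8 * M` are those of `M` reversed, then the leading digit `d` of `M`
is the last digit of `8 * M`, hence even and nonzero, so `d ≥ 2`. But `8 * M` has as many digits
`n` as `M`, so `8 * d * 10 ^ (n - 1) ≤ 8 * M < 10 ^ n`, forcing `8 * d < 10`.
-/

namespace Nat

theorem getLast_digits_mul_pow_le (b : ℕ) {m : ℕ} (hm : m ≠ 0) :
    (digits b m).getLast (digits_ne_nil_iff_ne_zero.mpr hm) * b ^ ((digits b m).length - 1) ≤ m := by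
  have hne : digits b m ≠ [] := digits_ne_nil_iff_ne_zero.mpr hm
  conv_rhs => rw [← ofDigits_digits b m, ← List.dropLast_append_getLast hne]
  rw [ofDigits_append, ofDigits_singleton, List.length_dropLast, Nat.mul_comm]
  exact Nat.le_add_left _ _

section ReverseMultiple

variable {b k M : ℕ} (hM : M ≠ 0) (hrev : (digits b M).reverse = digits b (k * M))
include hM hrev

theorem getLast_digits_eq_mul_mod_of_reverse_eq (hb : b ≠ 1) :
    (digits b M).getLast (digits_ne_nil_iff_ne_zero.mpr hM) = k * M % b := by
  have hhead := head!_digits (n := k * M) hb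
  rwa [← hrev, List.head!_eq_head?_getD, List.head?_reverse,
    List.getLast?_eq_some_getLast (digits_ne_nil_iff_ne_zero.mpr hM)] at hhead

theorem mul_getLast_digits_lt_of_reverse_eq (hb : 1 < b) :
    k * (digits b M).getLast (digits_ne_nil_iff_ne_zero.mpr hM) < b := by
  have hlen : (digits b (k * M)).length = (digits b M).length := by
    rw [← hrev, List.length_reverse]
  have hpos : 0 < (digits b M).length :=
    List.length_pos_iff.mpr (digits_ne_nil_iff_ne_zero.mpr hM)
  have hupper : k * M < b * b ^ ((digits b M).length - 1) := by
    rw [← _root_.pow_succ', Nat.sub_add_cancel hpos, ← hlen]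
    exact lt_base_pow_length_digits hb
  have hlower := Nat.mul_le_mul_left k (getLast_digits_mul_pow_le b hM)
  rw [← Nat.mul_assoc] at hlower
  exact Nat.lt_of_mul_lt_mul_right (hlower.trans_lt hupper)

end ReverseMultiple
end Nat

/-- There is no positive `(10, 8)`-reverse multiple. -/
theorem stmt_11 :
    ¬ ∃ M : ℕ, 0 < M ∧ (Nat.digits 10 M).reverse = Nat.digits 10 (8 * M) := by
  rintro ⟨M, hM, hrev⟩
  have hd_ne := Nat.getLast_digit_ne_zero 10 hM.ne'
  have hd_eq := Nat.getLast_digits_eq_mul_mod_of_reverse_eq hM.ne' hrev (by norm_num)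
  have hd_lt := Nat.mul_getLast_digits_lt_of_reverse_eq hM.ne' hrev (by norm_num)
  omega
end

section
/- Let k be an integer with 1 ≤ k ≤ 9. There exists a positive integer M that is a (10,k)-reverse multiple if and only if k = 1, k = 4, or k = 9. -/
/-!
Let `M` have `n` digits, leading digit `a` and last digit `b`. If the digits of `k * M` are those
of `M` reversed, then `k * M` also has `n` digits, its leading digit is `b` and its last digit is
`a`. Since `a * 10 ^ (n - 1) ≤ M < (a + 1) * 10 ^ (n - 1)`, this forces
`k * a ≤ b < k * (a + 1)`, and comparing last digits gives `k * b ≡ a [MOD 10]`. As `a ≥ 1` and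
`b ≤ 9`, also `k ≤ 9`, and a finite check leaves only `k = 1, 4, 9`, realised by `1`, `2178` and
`1089`.
-/

namespace Nat

theorem head?_digits {b m : ℕ} (hb : 1 < b) (hm : m ≠ 0) :
    (digits b m).head? = some (m % b) := by
  rw [digits_def' hb (pos_of_ne_zero hm)]
  rfl

theorem getLast?_digits {b m : ℕ} (hb : 1 < b) (hm : m ≠ 0) :
    (digits b m).getLast? = some (m / b ^ log b m) := by
  have hlen : (digits b m).length = log b m + 1 := length_digits b m hb hm
  have hlt : m / b ^ log b m < b := by
    rw [div_lt_iff_lt_mul (by positivity), ← pow_succ']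
    exact lt_pow_succ_log_self hb m
  rw [List.getLast?_eq_getElem?, hlen, Nat.add_sub_cancel, ← mod_eq_of_lt hlt,
    ← getD_digits m _ hb, List.getElem?_eq_getElem (by omega), List.getD_eq_getElem]

end Nat

theorem digit_constraints_of_reverse_eq_digits_mul {β k M : ℕ} (hβ : 1 < β) (hM : M ≠ 0)
    (h : (Nat.digits β M).reverse = Nat.digits β (k * M)) :
    ∃ a b, a ≠ 0 ∧ b < β ∧ k * a ≤ b ∧ b < k * (a + 1) ∧ k * b % β = a := by
  have hkM : k * M ≠ 0 := by
    rintro hkM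
    rw [hkM, Nat.digits_zero, List.reverse_eq_nil_iff, Nat.digits_eq_nil_iff_eq_zero] at h
    exact hM h
  have hlog : Nat.log β (k * M) = Nat.log β M := by
    have := congrArg List.length h
    rwa [List.length_reverse, Nat.length_digits β M hβ hM, Nat.length_digits β _ hβ hkM,
      Nat.add_right_cancel_iff, eq_comm] at this
  have hpow : 0 < β ^ Nat.log β M := by positivity
  set a := M / β ^ Nat.log β M
  set b := M % β
  have hlead : k * M / β ^ Nat.log β M = b := by
    have := Nat.getLast?_digits hβ hkM
    rwa [hlog, ← h, List.getLast?_reverse, Nat.head?_digits hβ hM, Option.some_inj,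
      eq_comm] at this
  have hlast : k * M % β = a := by
    have := Nat.head?_digits hβ hkM
    rwa [← h, List.head?_reverse, Nat.getLast?_digits hβ hM, Option.some_inj, eq_comm] at this
  refine ⟨a, b, ?_, Nat.mod_lt _ (by omega), ?_, ?_, ?_⟩
  · exact (Nat.div_pos (Nat.pow_log_le_self β hM) hpow).ne'
  · exact hlead ▸ Nat.mul_div_le_mul_div_assoc k M _
  · rw [← hlead, Nat.div_lt_iff_lt_mul hpow, mul_assoc]
    exact Nat.mul_lt_mul_of_pos_left (Nat.lt_mul_of_div_lt (Nat.lt_succ_self a) hpow)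
      (Nat.pos_of_ne_zero (left_ne_zero_of_mul hkM))
  · rw [← hlast, Nat.mul_mod_mod]

theorem eq_one_or_four_or_nine_of_digit_constraints {k a b : ℕ} (ha : a ≠ 0) (hb : b < 10)
    (hlow : k * a ≤ b) (hhigh : b < k * (a + 1)) (hmod : k * b % 10 = a) :
    k = 1 ∨ k = 4 ∨ k = 9 := by
  have hk : k < 10 :=
    (Nat.le_mul_of_pos_right k (Nat.pos_of_ne_zero ha)).trans_lt (hlow.trans_lt hb)
  interval_cases k <;> interval_cases b <;> omega

theorem stmt_12_general (k : ℕ) :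
    (∃ M : ℕ, 0 < M ∧ (Nat.digits 10 M).reverse = Nat.digits 10 (k * M)) ↔
      k = 1 ∨ k = 4 ∨ k = 9 := by
  constructor
  · rintro ⟨M, hM, h⟩
    obtain ⟨a, b, ha, hb, hlow, hhigh, hmod⟩ :=
      digit_constraints_of_reverse_eq_digits_mul (by norm_num) hM.ne' h
    exact eq_one_or_four_or_nine_of_digit_constraints ha hb hlow hhigh hmod
  · rintro (rfl | rfl | rfl)
    · exact ⟨1, by norm_num⟩
    · exact ⟨2178, by norm_num⟩
    · exact ⟨1089, by norm_num⟩

/-- For `1 ≤ k ≤ 9`, there exists a positive `(10, k)`-reverse multiple if and only if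
`k = 1`, `k = 4` or `k = 9`. -/
theorem stmt_12 (k : ℕ) (hk1 : 1 ≤ k) (hk9 : k ≤ 9) :
    (∃ M : ℕ, 0 < M ∧ (Nat.digits 10 M).reverse = Nat.digits 10 (k * M)) ↔
      k = 1 ∨ k = 4 ∨ k = 9 :=
  stmt_12_general k
end

section
/- Every positive (10,4)-reverse multiple M has units digit 8 and leading decimal digit 2; that is, M ≡ 8 (mod 10) and the last entry of Nat.digits 10 M (the most significant digit) equals 2. -/
/-!
Write `L` for the number of decimal digits of `M` and `P = 10 ^ (L - 1)`. Reversal swaps the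
units digit and the leading digit: the leading digit of `M` is `M / P = 4M mod 10` and the
leading digit of `4M` (which also has `L` digits) is `4M / P = M mod 10`. Hence
`4 (M / P) ≤ 4M / P ≤ 9`, so the leading digit of `M` is at most `2`; it is even and nonzero,
so it is `2`. The units digit `a` then satisfies `8 ≤ a` and `4a ≡ 2 (mod 10)`, so `a = 8`.
-/

namespace Nat

theorem getLast_digits_eq_div_pow {b n : ℕ} (hb : 1 < b) (hn : n ≠ 0) :
    (b.digits n).getLast (digits_ne_nil_iff_ne_zero.mpr hn) =
      n / b ^ ((b.digits n).length - 1) := by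
  rw [self_div_pow_eq_ofDigits_drop _ _ hb, List.drop_length_sub_one, ofDigits_singleton]

theorem getLast?_digits_eq_div_pow {b n : ℕ} (hb : 1 < b) (hn : n ≠ 0) :
    (b.digits n).getLast? = some (n / b ^ ((b.digits n).length - 1)) := by
  rw [List.getLast?_eq_some_getLast (digits_ne_nil_iff_ne_zero.mpr hn),
    getLast_digits_eq_div_pow hb hn]

theorem div_pow_length_digits_sub_one_ne_zero {b n : ℕ} (hb : 1 < b) (hn : n ≠ 0) :
    n / b ^ ((b.digits n).length - 1) ≠ 0 := by
  rw [← getLast_digits_eq_div_pow hb hn]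
  exact getLast_digit_ne_zero b hn

section ReverseMultiple

variable {b k M : ℕ}

theorem length_digits_mul_eq_of_reverse (hrev : (b.digits M).reverse = b.digits (k * M)) :
    (b.digits (k * M)).length = (b.digits M).length := by
  rw [← hrev, List.length_reverse]

theorem mul_ne_zero_of_reverse (hM : M ≠ 0) (hrev : (b.digits M).reverse = b.digits (k * M)) :
    k * M ≠ 0 := by
  rw [← digits_ne_nil_iff_ne_zero, ← hrev, Ne, List.reverse_eq_nil_iff]
  exact digits_ne_nil_iff_ne_zero.mpr hM

theorem mul_mod_eq_div_pow_of_reverse (hb : 1 < b) (hM : M ≠ 0)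
    (hrev : (b.digits M).reverse = b.digits (k * M)) :
    k * M % b = M / b ^ ((b.digits M).length - 1) := by
  have hlast : (b.digits M).getLast? = some (k * M % b) := by
    rw [← List.head?_reverse, hrev,
      digits_eq_cons_digits_div hb (mul_ne_zero_of_reverse hM hrev), List.head?_cons]
  rw [getLast?_digits_eq_div_pow hb hM] at hlast
  exact (Option.some.inj hlast).symm

theorem mod_eq_mul_div_pow_of_reverse (hb : 1 < b) (hM : M ≠ 0)
    (hrev : (b.digits M).reverse = b.digits (k * M)) :
    M % b = k * M / b ^ ((b.digits M).length - 1) := by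
  have hlast : (b.digits (k * M)).getLast? = some (M % b) := by
    rw [← hrev, List.getLast?_reverse, digits_eq_cons_digits_div hb hM, List.head?_cons]
  rw [getLast?_digits_eq_div_pow hb (mul_ne_zero_of_reverse hM hrev),
    length_digits_mul_eq_of_reverse hrev] at hlast
  exact (Option.some.inj hlast).symm

end ReverseMultiple

end Nat

/-- Every positive `(10, 4)`-reverse multiple has units digit `8` and most significant
decimal digit `2`. -/
theorem stmt_13 (M : ℕ) (hM : 0 < M)
    (hrev : (Nat.digits 10 M).reverse = Nat.digits 10 (4 * M)) :
    M % 10 = 8 ∧ (Nat.digits 10 M).getLast? = some 2 := by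
  have hb : 1 < 10 := by norm_num
  have hM0 : M ≠ 0 := hM.ne'
  set P := 10 ^ ((Nat.digits 10 M).length - 1)
  have hlead : 4 * M % 10 = M / P := Nat.mul_mod_eq_div_pow_of_reverse hb hM0 hrev
  have hunits : M % 10 = 4 * M / P := Nat.mod_eq_mul_div_pow_of_reverse hb hM0 hrev
  have hlead_ne : M / P ≠ 0 := Nat.div_pow_length_digits_sub_one_ne_zero hb hM0
  have hmono : 4 * (M / P) ≤ 4 * M / P := Nat.mul_div_le_mul_div_assoc 4 M P
  have hdigits : M % 10 = 8 ∧ M / P = 2 := by omega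
  refine ⟨hdigits.1, ?_⟩
  rw [Nat.getLast?_digits_eq_div_pow hb hM0, hdigits.2]
end

section
/- The set of positive (10,4)-reverse multiples is infinite, and the set of positive (10,9)-reverse multiples is infinite. -/
lemma rep9 (n : ℕ) : Nat.ofDigits 10 (List.replicate n 9) + 1 = 10 ^ n := by
  induction n with
  | zero => simp
  | succ n ih =>
    rw [List.replicate_succ, Nat.ofDigits_cons, pow_succ, ← ih]
    ring

lemma digits_eq (a b c d : ℕ) (ha : a < 10) (hb : b < 10) (hc : c < 10) (hd : d < 10)
    (hd0 : d ≠ 0) (n : ℕ) :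
    Nat.digits 10 (Nat.ofDigits 10 ([a, b] ++ List.replicate n 9 ++ [c, d])) =
      [a, b] ++ List.replicate n 9 ++ [c, d] := by
  apply Nat.digits_ofDigits 10 (by norm_num)
  · intro l hl
    simp [List.mem_append, List.mem_replicate] at hl
    rcases hl with (h | h) | h <;> omega
  · intro h
    simp [List.getLast_append]
    exact hd0

lemma ofDigits_val (a b c d : ℕ) (n : ℕ) :
    Nat.ofDigits 10 ([a, b] ++ List.replicate n 9 ++ [c, d]) =
      a + 10 * b + 100 * (Nat.ofDigits 10 (List.replicate n 9)) +
        100 * 10 ^ n * (c + 10 * d) := by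
  rw [Nat.ofDigits_append, Nat.ofDigits_append]
  simp [Nat.ofDigits, List.length_replicate]
  ring_nf
  try tauto

lemma key (k a b c d : ℕ) (ha : a < 10) (hb : b < 10) (hc : c < 10) (hd : d < 10)
    (hd0 : d ≠ 0) (ha0 : a ≠ 0)
    (heq : ∀ g : ℕ, k * (d + 10 * c + 100 * g + 100 * (g + 1) * (b + 10 * a)) =
      a + 10 * b + 100 * g + 100 * (g + 1) * (c + 10 * d)) :
    {M : ℕ | 0 < M ∧ (Nat.digits 10 M).reverse = Nat.digits 10 (k * M)}.Infinite := by
  apply Set.infinite_of_injective_forall_mem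
    (f := fun n => Nat.ofDigits 10 ([d, c] ++ List.replicate n 9 ++ [b, a]))
  · intro m n hmn
    simp only [] at hmn
    have h1 := digits_eq d c b a hd hc hb ha ha0 m
    have h2 := digits_eq d c b a hd hc hb ha ha0 n
    have : ([d, c] ++ List.replicate m 9 ++ [b, a] : List ℕ) =
        [d, c] ++ List.replicate n 9 ++ [b, a] := by
      rw [← h1, ← h2]; exact congrArg _ hmn
    have := congrArg List.length this
    simpa using this
  · intro n
    constructor
    · rw [ofDigits_val]
      have : 0 < b + 10 * a := by omega
      positivity
    · rw [digits_eq d c b a hd hc hb ha ha0 n]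
      have hv : k * Nat.ofDigits 10 ([d, c] ++ List.replicate n 9 ++ [b, a]) =
          Nat.ofDigits 10 ([a, b] ++ List.replicate n 9 ++ [c, d]) := by
        rw [ofDigits_val, ofDigits_val, ← rep9 n]
        have := heq (Nat.ofDigits 10 (List.replicate n 9))
        linarith
      rw [hv, digits_eq a b c d ha hb hc hd hd0 n]
      simp

/-- There are infinitely many positive `(10, 4)`-reverse multiples and infinitely many
positive `(10, 9)`-reverse multiples. -/
theorem stmt_19 :
    {M : ℕ | 0 < M ∧ (Nat.digits 10 M).reverse = Nat.digits 10 (4 * M)}.Infinite ∧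
    {M : ℕ | 0 < M ∧ (Nat.digits 10 M).reverse = Nat.digits 10 (9 * M)}.Infinite := by
  constructor
  · exact key 4 2 1 7 8 (by norm_num) (by norm_num) (by norm_num) (by norm_num)
      (by norm_num) (by norm_num) (fun g => by ring)
  · exact key 9 1 0 8 9 (by norm_num) (by norm_num) (by norm_num) (by norm_num)
      (by norm_num) (by norm_num) (fun g => by ring)
end
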